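/- Let A and B be independent square-integrable real-valued random variables on a probability space, with variances a = Var(A) > 0 and b = Var(B) > 0. Then: (i) for every β ∈ ℝ, Var(βA + (1−β)B) = β² a + (1−β)² b; and (ii) the function β ↦ β² a + (1−β)² b attains its unique global minimum at β* = b/(a+b). Consequently, in the simplified DARTS search space with two operations where the mixed edge output estimating the optimal feature map m* is ō = β_skip·x_e + β_conv·o_conv(x_e) with β_skip + β_conv = 1, and where x_e − m* and o_conv(x_e) − m* are independent with positive variances, the weights minimizing Var(ō − m*) satisfy β_skip = Var(o_conv(x_e) − m*)/(Var(x_e − m*) + Var(o_conv(x_e) − m*)) and β_conv = Var(x_e − m*)/(Var(x_e − m*) + Var(o_conv(x_e) − m*)); in particular β_skip ∝ Var(o_conv(x_e) − m*) and β_conv ∝ Var(x_e − m*). -/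

import Mathlib

open MeasureTheory ProbabilityTheory

/-! Independence makes the variance of `β A + γ B` additive, so on the line `β + γ = 1` it is the
quadratic `β ^ 2 a + (1 - β) ^ 2 b`. Completing the square,
`β ^ 2 a + (1 - β) ^ 2 b = a b / (a + b) + (a + b) (β - b / (a + b)) ^ 2`,
so for `a + b > 0` its unique minimizer is `β = b / (a + b)`, and then `1 - β = a / (a + b)`. -/

theorem ProbabilityTheory.IndepFun.variance_const_mul_add_const_mul {Ω : Type*}
    [MeasurableSpace Ω] {μ : Measure Ω} [IsProbabilityMeasure μ] {X Y : Ω → ℝ}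
    (hXY : IndepFun X Y μ) (hX : MemLp X 2 μ) (hY : MemLp Y 2 μ) (c d : ℝ) :
    variance (fun ω => c * X ω + d * Y ω) μ = c ^ 2 * variance X μ + d ^ 2 * variance Y μ := by
  have hcd : IndepFun (fun ω => c * X ω) (fun ω => d * Y ω) μ :=
    hXY.comp (measurable_const_mul c) (measurable_const_mul d)
  rw [← variance_const_mul, ← variance_const_mul]
  exact hcd.variance_add (hX.const_mul c) (hY.const_mul d)

theorem sq_mul_add_one_sub_sq_mul_eq {a b : ℝ} (hab : a + b ≠ 0) (β : ℝ) :
    β ^ 2 * a + (1 - β) ^ 2 * b = a * b / (a + b) + (a + b) * (β - b / (a + b)) ^ 2 := by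
  field_simp
  ring

theorem sq_mul_add_one_sub_sq_mul_lt {a b β : ℝ} (hab : 0 < a + b) (hβ : β ≠ b / (a + b)) :
    (b / (a + b)) ^ 2 * a + (1 - b / (a + b)) ^ 2 * b < β ^ 2 * a + (1 - β) ^ 2 * b := by
  rw [sq_mul_add_one_sub_sq_mul_eq hab.ne', sq_mul_add_one_sub_sq_mul_eq hab.ne', sub_self]
  have hsq : 0 < (β - b / (a + b)) ^ 2 := sq_pos_of_ne_zero (sub_ne_zero.2 hβ)
  simpa using mul_pos hab hsq

theorem forall_le_iff_eq_of_forall_ne_lt {α β : Type*} [Preorder β] {f : α → β} {m x : α}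
    (hm : ∀ y, y ≠ m → f m < f y) : (∀ y, f x ≤ f y) ↔ x = m := by
  refine ⟨fun hx => by_contra fun hxm => (hm x hxm).not_ge (hx m), ?_⟩
  rintro rfl y
  rcases eq_or_ne y x with rfl | hy
  · exact le_rfl
  · exact (hm y hy).le

/-- For independent square-integrable real random variables `A`, `B` with positive
variances `a`, `b`:
(i) `Var(βA + (1−β)B) = β²a + (1−β)²b` for every `β`;
(ii) `β ↦ β²a + (1−β)²b` attains its unique global minimum at `β* = b/(a+b)`;
consequently, among all weights `β_skip + β_conv = 1`, the variance
`Var(β_skip·A + β_conv·B)` is minimized exactly at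
`β_skip = b/(a+b)` and `β_conv = a/(a+b)` (with `A = x_e − m*`,
`B = o_conv(x_e) − m*`). -/
theorem variance_mixed_min (Ω : Type*) [MeasureSpace Ω]
    [IsProbabilityMeasure (volume : Measure Ω)]
    (A B : Ω → ℝ) (hA : MemLp A 2 volume) (hB : MemLp B 2 volume)
    (hInd : IndepFun A B volume)
    (a b : ℝ) (ha : a = variance A volume) (hb : b = variance B volume)
    (hapos : 0 < a) (hbpos : 0 < b) :
    (∀ β : ℝ, variance (fun ω => β * A ω + (1 - β) * B ω) volume
        = β ^ 2 * a + (1 - β) ^ 2 * b) ∧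
    (∀ β : ℝ, β ≠ b / (a + b) →
      (b / (a + b)) ^ 2 * a + (1 - b / (a + b)) ^ 2 * b
        < β ^ 2 * a + (1 - β) ^ 2 * b) ∧
    (∀ βskip βconv : ℝ, βskip + βconv = 1 →
      ((∀ βskip' βconv' : ℝ, βskip' + βconv' = 1 →
          variance (fun ω => βskip * A ω + βconv * B ω) volume ≤
            variance (fun ω => βskip' * A ω + βconv' * B ω) volume) ↔
        (βskip = b / (a + b) ∧ βconv = a / (a + b)))) := by
  have hab : 0 < a + b := add_pos hapos hbpos
  have hvar (β γ : ℝ) :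
      variance (fun ω => β * A ω + γ * B ω) volume = β ^ 2 * a + γ ^ 2 * b := by
    rw [hInd.variance_const_mul_add_const_mul hA hB, ha, hb]
  have hmin (β : ℝ) := @sq_mul_add_one_sub_sq_mul_lt a b β hab
  refine ⟨fun β => hvar β (1 - β), hmin, fun βskip βconv hsum => ?_⟩
  obtain rfl : βconv = 1 - βskip := by linarith
  have hconv : a / (a + b) = 1 - b / (a + b) := by field_simp; ring
  simp only [hvar, hconv]
  calc (∀ βskip' βconv' : ℝ, βskip' + βconv' = 1 →
        βskip ^ 2 * a + (1 - βskip) ^ 2 * b ≤ βskip' ^ 2 * a + βconv' ^ 2 * b)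
      ↔ ∀ β : ℝ, βskip ^ 2 * a + (1 - βskip) ^ 2 * b ≤ β ^ 2 * a + (1 - β) ^ 2 * b :=
        ⟨fun h β => h β (1 - β) (add_sub_cancel β 1), fun h β γ hβγ => by
          obtain rfl : γ = 1 - β := by linarith
          exact h β⟩
    _ ↔ βskip = b / (a + b) :=
        forall_le_iff_eq_of_forall_ne_lt (f := fun β => β ^ 2 * a + (1 - β) ^ 2 * b) hmin
    _ ↔ βskip = b / (a + b) ∧ 1 - βskip = 1 - b / (a + b) :=
        (and_iff_left_of_imp fun h => by rw [h]).symm
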